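/- Let B = {B_{ab|xy}} be a Bell functional with nonnegative coefficients and ω(B) > 0, and let ρ be a density matrix on ℂ^d ⊗ ℂ^d. Then the largest Bell-inequality violation is bounded by the largest induced steering-inequality violation: LV(ρ, B) ≤ sup over Bob POVM families E_B of LV_s(ρ, F_(B;E_B)), where F_(B;E_B) is the induced steering functional with F_{a|x} = ∑_{b,y} B_{ab|xy} E_{b|y} (the supremum restricted to E_B with ω_s(F_(B;E_B)) > 0). -/

import Mathlib

/-!
Fix Bob's POVMs `E_B` and let `F` be the induced steering functional. The Bell value of the
quantum correlation equals the steering value of Alice's induced assemblage, and measuring `E_B`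
on the hidden states of a local-hidden-state model gives a local-hidden-variable model, so
`ω_s(F) ≤ ω(B)` and the nonlocality fraction is at most the steering fraction. When `ω_s(F) = 0`
the Bell value itself vanishes, because every assemblage has steering value at most `|A| ω_s(F)`.
-/

open scoped ComplexOrder Kronecker Matrix
open MeasureTheory

noncomputable section

namespace QSteer

/-- Square complex matrices indexed by `ι` (the Hilbert space `ℂ^ι`). -/
abbrev HMat (ι : Type) : Type := Matrix ι ι ℂ

/-- A density matrix: positive semidefinite with unit trace. -/
def IsDensity {ι : Type} [Fintype ι] (ρ : HMat ι) : Prop :=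
  ρ.PosSemidef ∧ ρ.trace = 1

/-- A POVM family `{E_{a|x}}`: positive semidefinite effects summing to the identity
for every setting `x`. -/
def IsPOVM {ι A X : Type} [Fintype ι] [Fintype A] [DecidableEq ι]
    (E : A → X → HMat ι) : Prop :=
  (∀ a x, (E a x).PosSemidef) ∧ ∀ x, ∑ a, E a x = 1

/-- A projective measurement family: a POVM family whose effects are orthogonal
projections. -/
def IsProjPOVM {ι A X : Type} [Fintype ι] [Fintype A] [DecidableEq ι]
    (E : A → X → HMat ι) : Prop :=
  IsPOVM E ∧ ∀ a x, (E a x).IsHermitian ∧ E a x * E a x = E a x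

/-- An assemblage `{σ_{a|x}}`: positive semidefinite matrices such that `∑_a σ_{a|x}`
is the same unit-trace matrix for every `x`. -/
def IsAssemblage {ι A X : Type} [Fintype ι] [Fintype A] (σ : A → X → HMat ι) : Prop :=
  (∀ a x, (σ a x).PosSemidef) ∧ (∀ x x', ∑ a, σ a x = ∑ a, σ a x') ∧
    ∀ x, (∑ a, σ a x).trace = 1

/-- An unsteerable assemblage: one admitting a local-hidden-state model. -/
def IsUnsteerable {ι A X : Type} [Fintype ι] [Fintype A] (σ : A → X → HMat ι) : Prop :=
  ∃ (n : ℕ) (w : Fin n → ℝ) (p : A → X → Fin n → ℝ) (τ : Fin n → HMat ι),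
    (∀ l, 0 ≤ w l) ∧ (∑ l, w l = 1) ∧
    (∀ a x l, 0 ≤ p a x l) ∧ (∀ x l, ∑ a, p a x l = 1) ∧
    (∀ l, IsDensity (τ l)) ∧
    ∀ a x, σ a x = ∑ l, (w l * p a x l) • τ l

/-- A steering functional `{F_{a|x}}`: a family of positive semidefinite matrices. -/
def IsSteeringFunctional {ι A X : Type} [Fintype ι] (F : A → X → HMat ι) : Prop :=
  ∀ a x, (F a x).PosSemidef

/-- The value `∑_{a,x} tr(F_{a|x} σ_{a|x})` (real part). -/
def steeringValue {ι A X : Type} [Fintype ι] [Fintype A] [Fintype X]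
    (F σ : A → X → HMat ι) : ℝ :=
  ∑ x, ∑ a, ((F a x * σ a x).trace).re

/-- The steering bound `ω_s(F)`. -/
def steeringBound {ι A X : Type} [Fintype ι] [Fintype A] [Fintype X]
    (F : A → X → HMat ι) : ℝ :=
  sSup {r : ℝ | ∃ σ : A → X → HMat ι, IsAssemblage σ ∧ IsUnsteerable σ ∧
    r = steeringValue F σ}

/-- The steering fraction `Γ_s(σ, F)`. -/
def steeringFraction {ι A X : Type} [Fintype ι] [Fintype A] [Fintype X]
    (σ F : A → X → HMat ι) : ℝ :=
  steeringValue F σ / steeringBound F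

/-- Partial trace over the first (Alice's) tensor factor. -/
def ptraceA {ιA ιB : Type} [Fintype ιA] (M : Matrix (ιA × ιB) (ιA × ιB) ℂ) : HMat ιB :=
  Matrix.of fun j j' => ∑ i, M (i, j) (i, j')

/-- The assemblage induced by a bipartite state and Alice's POVMs:
`σ_{a|x} = Tr_A[ρ (E_{a|x} ⊗ I)]`. -/
def inducedAssemblage {ιA ιB A X : Type} [Fintype ιA] [Fintype ιB] [DecidableEq ιB]
    (ρ : Matrix (ιA × ιB) (ιA × ιB) ℂ) (E : A → X → HMat ιA) : A → X → HMat ιB :=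
  fun a x => ptraceA (ρ * ((E a x) ⊗ₖ (1 : HMat ιB)))

/-- Largest steering-inequality violation `LV_s(ρ, F)` over Alice POVM families. -/
def LVs {ιA ιB A X : Type} [Fintype ιA] [Fintype ιB] [DecidableEq ιA] [DecidableEq ιB]
    [Fintype A] [Fintype X]
    (ρ : Matrix (ιA × ιB) (ιA × ιB) ℂ) (F : A → X → HMat ιB) : ℝ :=
  sSup {r : ℝ | ∃ E : A → X → HMat ιA, IsPOVM E ∧
    r = steeringFraction (inducedAssemblage ρ E) F}

/-- Largest steering-inequality violation `LV_s^π(ρ, F)` over projective Alice families. -/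
def LVsProj {ιA ιB A X : Type} [Fintype ιA] [Fintype ιB] [DecidableEq ιA] [DecidableEq ιB]
    [Fintype A] [Fintype X]
    (ρ : Matrix (ιA × ιB) (ιA × ιB) ℂ) (F : A → X → HMat ιB) : ℝ :=
  sSup {r : ℝ | ∃ E : A → X → HMat ιA, IsProjPOVM E ∧
    r = steeringFraction (inducedAssemblage ρ E) F}

/-- The maximally entangled state `|Ψ⁺⟩⟨Ψ⁺|` on `ℂ^ι ⊗ ℂ^ι`. -/
def maxEnt (ι : Type) [Fintype ι] [DecidableEq ι] : Matrix (ι × ι) (ι × ι) ℂ :=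
  Matrix.of fun pq rs => if pq.1 = pq.2 ∧ rs.1 = rs.2 then ((Fintype.card ι : ℂ))⁻¹ else 0

/-- The fully entangled fraction `F(ρ) = sup_U ⟨Ψ⁺|(U ⊗ I) ρ (U ⊗ I)†|Ψ⁺⟩`. -/
def fef {ι : Type} [Fintype ι] [DecidableEq ι] (ρ : Matrix (ι × ι) (ι × ι) ℂ) : ℝ :=
  sSup {r : ℝ | ∃ U : Matrix ι ι ℂ, U ∈ Matrix.unitaryGroup ι ℂ ∧
    r = ((maxEnt ι * ((U ⊗ₖ (1 : HMat ι)) * ρ * ((U ⊗ₖ (1 : HMat ι))ᴴ))).trace).re}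

/-- A local-hidden-variable (Bell-local) correlation. -/
def IsLHV {A B X Y : Type} [Fintype A] [Fintype B] (P : A → B → X → Y → ℝ) : Prop :=
  ∃ (n : ℕ) (w : Fin n → ℝ) (pA : A → X → Fin n → ℝ) (pB : B → Y → Fin n → ℝ),
    (∀ l, 0 ≤ w l) ∧ (∑ l, w l = 1) ∧
    (∀ a x l, 0 ≤ pA a x l) ∧ (∀ x l, ∑ a, pA a x l = 1) ∧
    (∀ b y l, 0 ≤ pB b y l) ∧ (∀ y l, ∑ b, pB b y l = 1) ∧
    ∀ a b x y, P a b x y = ∑ l, w l * pA a x l * pB b y l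

/-- The Bell value `∑ B_{ab|xy} P(a,b|x,y)`. -/
def bellValue {A B X Y : Type} [Fintype A] [Fintype B] [Fintype X] [Fintype Y]
    (Bf P : A → B → X → Y → ℝ) : ℝ :=
  ∑ x, ∑ y, ∑ a, ∑ b, Bf a b x y * P a b x y

/-- The local bound `ω(B)`. -/
def localBound {A B X Y : Type} [Fintype A] [Fintype B] [Fintype X] [Fintype Y]
    (Bf : A → B → X → Y → ℝ) : ℝ :=
  sSup {r : ℝ | ∃ P : A → B → X → Y → ℝ, IsLHV P ∧ r = bellValue Bf P}

/-- The nonlocality fraction `Γ(P, B)`. -/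
def nonlocalityFraction {A B X Y : Type} [Fintype A] [Fintype B] [Fintype X] [Fintype Y]
    (P Bf : A → B → X → Y → ℝ) : ℝ :=
  bellValue Bf P / localBound Bf

/-- The quantum correlation `P(a,b|x,y) = tr[ρ (E_{a|x} ⊗ E_{b|y})]`. -/
def quantumCorr {ιA ιB A B X Y : Type} [Fintype ιA] [Fintype ιB]
    (ρ : Matrix (ιA × ιB) (ιA × ιB) ℂ) (EA : A → X → HMat ιA) (EB : B → Y → HMat ιB) :
    A → B → X → Y → ℝ :=
  fun a b x y => ((ρ * ((EA a x) ⊗ₖ (EB b y))).trace).re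

/-- Largest Bell-inequality violation `LV(ρ, B)` over pairs of POVM families. -/
def LV {ιA ιB A B X Y : Type} [Fintype ιA] [Fintype ιB] [DecidableEq ιA] [DecidableEq ιB]
    [Fintype A] [Fintype B] [Fintype X] [Fintype Y]
    (ρ : Matrix (ιA × ιB) (ιA × ιB) ℂ) (Bf : A → B → X → Y → ℝ) : ℝ :=
  sSup {r : ℝ | ∃ (EA : A → X → HMat ιA) (EB : B → Y → HMat ιB),
    IsPOVM EA ∧ IsPOVM EB ∧ r = nonlocalityFraction (quantumCorr ρ EA EB) Bf}

/-- Largest Bell-inequality violation `LV^π(ρ, B)` over pairs of projective families. -/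
def LVProj {ιA ιB A B X Y : Type} [Fintype ιA] [Fintype ιB] [DecidableEq ιA] [DecidableEq ιB]
    [Fintype A] [Fintype B] [Fintype X] [Fintype Y]
    (ρ : Matrix (ιA × ιB) (ιA × ιB) ℂ) (Bf : A → B → X → Y → ℝ) : ℝ :=
  sSup {r : ℝ | ∃ (EA : A → X → HMat ιA) (EB : B → Y → HMat ιB),
    IsProjPOVM EA ∧ IsProjPOVM EB ∧ r = nonlocalityFraction (quantumCorr ρ EA EB) Bf}

/-- The steering functional induced by a Bell functional and Bob's POVMs:
`F_{a|x} = ∑_{b,y} B_{ab|xy} E_{b|y}`. -/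
def inducedF {ιB A B X Y : Type} [Fintype B] [Fintype Y]
    (Bf : A → B → X → Y → ℝ) (EB : B → Y → HMat ιB) : A → X → HMat ιB :=
  fun a x => ∑ y, ∑ b, Bf a b x y • EB b y

/-- The `k`-fold tensor power of a bipartite state, regrouped as a bipartite state on
`ℂ^{d^k} ⊗ ℂ^{d^k}` (Alice's factors grouped together, likewise Bob's). -/
def tensorPower {ι : Type} (ρ : Matrix (ι × ι) (ι × ι) ℂ) (k : ℕ) :
    Matrix ((Fin k → ι) × (Fin k → ι)) ((Fin k → ι) × (Fin k → ι)) ℂ :=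
  Matrix.of fun p q => ∏ t, ρ (p.1 t, p.2 t) (q.1 t, q.2 t)

/-- The isotropic state `ρ_iso(p) = p |Ψ⁺⟩⟨Ψ⁺| + (1-p) I/d²` on `ℂ^d ⊗ ℂ^d`. -/
def iso (d : ℕ) (p : ℝ) : Matrix (Fin d × Fin d) (Fin d × Fin d) ℂ :=
  p • maxEnt (Fin d) + ((1 - p) / (d : ℝ) ^ 2) • (1 : Matrix (Fin d × Fin d) (Fin d × Fin d) ℂ)

/-- `sup_F Γ_s(σ, F)` over positive semidefinite steering functionals with positive
steering bound. -/
def supFrac {ι A X : Type} [Fintype ι] [Fintype A] [Fintype X] (σ : A → X → HMat ι) : ℝ :=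
  sSup {r : ℝ | ∃ F : A → X → HMat ι, IsSteeringFunctional F ∧ 0 < steeringBound F ∧
    r = steeringFraction σ F}

/-- The optimal steering fraction `S_O(σ) = max{0, sup_F Γ_s(σ, F) − 1}`. -/
def SO {ι A X : Type} [Fintype ι] [Fintype A] [Fintype X] (σ : A → X → HMat ι) : ℝ :=
  max 0 (supFrac σ - 1)

/-- The steerable weight `S_W(σ)`. -/
def SW {ι A X : Type} [Fintype ι] [Fintype A] [Fintype X] (σ : A → X → HMat ι) : ℝ :=
  sInf {ν : ℝ | 0 ≤ ν ∧ ν ≤ 1 ∧ ∃ σUS σS : A → X → HMat ι,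
    IsAssemblage σUS ∧ IsUnsteerable σUS ∧ IsAssemblage σS ∧
    ∀ a x, σ a x = (1 - ν) • σUS a x + ν • σS a x}

/-- The steering robustness `S_R(σ)`. -/
def SR {ι A X : Type} [Fintype ι] [Fintype A] [Fintype X] (σ : A → X → HMat ι) : ℝ :=
  sInf {ν : ℝ | 0 ≤ ν ∧ ∃ τ : A → X → HMat ι, IsAssemblage τ ∧
    IsUnsteerable (fun a x => (1 / (1 + ν)) • σ a x + (ν / (1 + ν)) • τ a x)}

/-- Separability of a bipartite state. -/
def IsSeparable {ιA ιB : Type} [Fintype ιA] [Fintype ιB]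
    (ρ : Matrix (ιA × ιB) (ιA × ιB) ℂ) : Prop :=
  ∃ (n : ℕ) (w : Fin n → ℝ) (ρA : Fin n → HMat ιA) (ρB : Fin n → HMat ιB),
    (∀ l, 0 ≤ w l) ∧ (∑ l, w l = 1) ∧ (∀ l, IsDensity (ρA l)) ∧ (∀ l, IsDensity (ρB l)) ∧
    ρ = ∑ l, w l • ((ρA l) ⊗ₖ (ρB l))

/-- The (unnormalized) output assemblage of a one-way LOCC subchannel acting on an
assemblage: `M(σ)_{a'|x'} = K (∑_{a,x} P(x|x') P(a'|x',a,x) σ_{a|x}) K†`. -/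
def wired {ι ι₂ A X A' X' : Type} [Fintype ι] [Fintype A] [Fintype X]
    (K : Matrix ι₂ ι ℂ) (Px : X → X' → ℝ) (Pa : A' → X' → A → X → ℝ)
    (σ : A → X → HMat ι) : A' → X' → HMat ι₂ :=
  fun a' x' => K * (∑ x, ∑ a, (Px x x' * Pa a' x' a x) • σ a x) * Kᴴ

instance matMeasurableSpace {m n : Type} : MeasurableSpace (Matrix m n ℂ) :=
  inferInstanceAs (MeasurableSpace (m → n → ℂ))

/-- The `(U ⊗ U*)`-twirl of a bipartite state with respect to a measure `μ` on the
unitary group (entrywise Bochner integral). -/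
def twirl {ι : Type} [Fintype ι] [DecidableEq ι]
    (μ : Measure (Matrix.unitaryGroup ι ℂ)) (ρ : Matrix (ι × ι) (ι × ι) ℂ) :
    Matrix (ι × ι) (ι × ι) ℂ :=
  Matrix.of fun p q =>
    ∫ V : Matrix.unitaryGroup ι ℂ,
      ((((V : Matrix ι ι ℂ)) ⊗ₖ ((V : Matrix ι ι ℂ).map (starRingEnd ℂ))) * ρ *
        ((((V : Matrix ι ι ℂ)) ⊗ₖ ((V : Matrix ι ι ℂ).map (starRingEnd ℂ)))ᴴ)) p q ∂μ

end QSteer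

namespace Matrix

variable {n : Type*} [Fintype n]

open scoped MatrixOrder in
theorem PosSemidef.trace_mul_nonneg {𝕜 : Type*} [RCLike 𝕜] {A B : Matrix n n 𝕜}
    (hA : A.PosSemidef) (hB : B.PosSemidef) : 0 ≤ (A * B).trace := by
  classical
  obtain ⟨S, rfl⟩ := CStarAlgebra.nonneg_iff_eq_star_mul_self.mp hB.nonneg
  rw [star_eq_conjTranspose, ← Matrix.mul_assoc, trace_mul_comm]
  simpa only [Matrix.mul_assoc] using (hA.mul_mul_conjTranspose_same S).trace_nonneg

theorem PosSemidef.re_trace_mul_nonneg {A B : Matrix n n ℂ} (hA : A.PosSemidef)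
    (hB : B.PosSemidef) : 0 ≤ (A * B).trace.re :=
  (Complex.nonneg_iff.mp (hA.trace_mul_nonneg hB)).1

theorem re_trace_mul_le_re_trace_mul_sum {ι : Type*} [Fintype ι] {A : Matrix n n ℂ}
    (hA : A.PosSemidef) {B : ι → Matrix n n ℂ} (hB : ∀ i, (B i).PosSemidef) (i : ι) :
    (A * B i).trace.re ≤ (A * ∑ j, B j).trace.re := by
  classical
  have hrest : 0 ≤ (A * ∑ j ∈ Finset.univ.erase i, B j).trace.re :=
    hA.re_trace_mul_nonneg (posSemidef_sum _ fun j _ => hB j)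
  rw [← Finset.sum_erase_add _ _ (Finset.mem_univ i), Matrix.mul_add, Matrix.trace_add,
    Complex.add_re]
  linarith

end Matrix

namespace QSteer

section PartialTrace

variable {ιA ιB : Type} [Fintype ιA]

theorem ptraceA_sum {κ : Type} (s : Finset κ) (M : κ → Matrix (ιA × ιB) (ιA × ιB) ℂ) :
    ptraceA (∑ k ∈ s, M k) = ∑ k ∈ s, ptraceA (M k) := by
  ext j j'
  simp only [ptraceA, Matrix.of_apply, Matrix.sum_apply]
  exact Finset.sum_comm

theorem conjTranspose_ptraceA (M : Matrix (ιA × ιB) (ιA × ιB) ℂ) :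
    (ptraceA M)ᴴ = ptraceA Mᴴ := by
  ext j j'
  simp [ptraceA, Matrix.conjTranspose_apply]

variable [Fintype ιB]

theorem trace_ptraceA (M : Matrix (ιA × ιB) (ιA × ιB) ℂ) : (ptraceA M).trace = M.trace := by
  simp only [Matrix.trace, ptraceA, Matrix.diag, Matrix.of_apply, Fintype.sum_prod_type]
  exact Finset.sum_comm

variable [DecidableEq ιB]

theorem ptraceA_mul_kronecker_one_comm (M : Matrix (ιA × ιB) (ιA × ιB) ℂ) (E : HMat ιA) :
    ptraceA (M * (E ⊗ₖ (1 : HMat ιB))) = ptraceA ((E ⊗ₖ (1 : HMat ιB)) * M) := by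
  ext j j'
  simp only [ptraceA, Matrix.of_apply, Matrix.mul_apply, Fintype.sum_prod_type,
    Matrix.kroneckerMap_apply, Matrix.one_apply, mul_ite, ite_mul, mul_zero, zero_mul,
    mul_one, Finset.sum_ite_eq', Finset.mem_univ, if_true, Finset.sum_ite_eq]
  rw [Finset.sum_comm]
  exact Finset.sum_congr rfl fun i _ => Finset.sum_congr rfl fun i' _ => mul_comm _ _

theorem trace_mul_ptraceA_mul_kronecker_one (M : Matrix (ιA × ιB) (ιA × ιB) ℂ) (E : HMat ιA)
    (N : HMat ιB) :
    (N * ptraceA (M * (E ⊗ₖ (1 : HMat ιB)))).trace = (M * (E ⊗ₖ N)).trace := by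
  simp only [Matrix.trace, Matrix.diag, Matrix.mul_apply, ptraceA, Matrix.of_apply,
    Fintype.sum_prod_type, Matrix.kroneckerMap_apply, Matrix.one_apply, mul_ite,
    mul_zero, mul_one, Finset.mul_sum, Finset.sum_ite_eq', Finset.mem_univ, if_true]
  refine Finset.sum_comm.trans ((Finset.sum_congr rfl fun _ _ => Finset.sum_comm).trans
    (Finset.sum_comm.trans ?_))
  refine Finset.sum_congr rfl fun _ _ => Finset.sum_congr rfl fun _ _ => ?_
  rw [Finset.sum_comm]
  exact Finset.sum_congr rfl fun _ _ => Finset.sum_congr rfl fun _ _ => by ring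

theorem posSemidef_ptraceA_mul_kronecker_one {ρ : Matrix (ιA × ιB) (ιA × ιB) ℂ}
    (hρ : ρ.PosSemidef) {E : HMat ιA} (hE : E.PosSemidef) :
    (ptraceA (ρ * (E ⊗ₖ (1 : HMat ιB)))).PosSemidef := by
  refine .of_dotProduct_mulVec_nonneg ?_ fun v => ?_
  · rw [Matrix.IsHermitian, conjTranspose_ptraceA, Matrix.conjTranspose_mul,
      Matrix.conjTranspose_kronecker, Matrix.conjTranspose_one, hE.isHermitian.eq,
      hρ.isHermitian.eq, ptraceA_mul_kronecker_one_comm]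
  · -- `v† Tr_A[ρ (E ⊗ 1)] v = tr (ρ (E ⊗ v v†))`
    rw [dotProduct_comm, ← Matrix.trace_vecMulVec, ← Matrix.mul_vecMulVec, Matrix.trace_mul_comm,
      trace_mul_ptraceA_mul_kronecker_one]
    exact hρ.trace_mul_nonneg (hE.kronecker (Matrix.posSemidef_vecMulVec_self_star v))

theorem isDensity_ptraceA [DecidableEq ιA] {ρ : Matrix (ιA × ιB) (ιA × ιB) ℂ}
    (hρ : IsDensity ρ) :
    IsDensity (ptraceA ρ) := by
  refine ⟨?_, (trace_ptraceA ρ).trans hρ.2⟩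
  simpa [Matrix.one_kronecker_one] using
    posSemidef_ptraceA_mul_kronecker_one hρ.1 Matrix.PosSemidef.one

end PartialTrace

section Steering

variable {ι A X : Type} [Fintype ι] [Fintype A] [Fintype X]

def unsteerableValues (F : A → X → HMat ι) : Set ℝ :=
  {r | ∃ σ : A → X → HMat ι, IsAssemblage σ ∧ IsUnsteerable σ ∧ r = steeringValue F σ}

theorem steeringValue_nonneg {F σ : A → X → HMat ι} (hF : ∀ a x, (F a x).PosSemidef)
    (hσ : ∀ a x, (σ a x).PosSemidef) : 0 ≤ steeringValue F σ :=
  Finset.sum_nonneg fun x _ => Finset.sum_nonneg fun a _ => (hF a x).re_trace_mul_nonneg (hσ a x)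

theorem card_inv_mul_le_steeringBound [Nonempty A] {F : A → X → HMat ι}
    (hbdd : BddAbove (unsteerableValues F)) {τ : HMat ι} (hτ : IsDensity τ) :
    (Fintype.card A : ℝ)⁻¹ * ∑ x, ∑ a, (F a x * τ).trace.re ≤ steeringBound F := by
  set c : ℝ := (Fintype.card A : ℝ)⁻¹
  have hc : 0 ≤ c := inv_nonneg.mpr (Nat.cast_nonneg _)
  have hc_sum : ∑ _a : A, c = 1 := by
    rw [Finset.sum_const, Finset.card_univ, nsmul_eq_mul, mul_inv_cancel₀ (by positivity)]
  have hunif : IsAssemblage (fun (_ : A) (_ : X) => c • τ) := by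
    refine ⟨fun _ _ => hτ.1.smul hc, fun _ _ => rfl, fun _ => ?_⟩
    rw [← Finset.sum_smul, hc_sum, one_smul, hτ.2]
  have hunif_lhs : IsUnsteerable (fun (_ : A) (_ : X) => c • τ) :=
    ⟨1, fun _ => 1, fun _ _ _ => c, fun _ => τ, fun _ => zero_le_one, by simp,
      fun _ _ _ => hc, fun _ _ => hc_sum, fun _ => hτ, fun _ _ => by simp⟩
  calc c * ∑ x, ∑ a, (F a x * τ).trace.re
      = steeringValue F (fun _ _ => c • τ) := by
        simp only [steeringValue, Finset.mul_sum, Matrix.mul_smul, Matrix.trace_smul,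
          Complex.smul_re, smul_eq_mul]
    _ ≤ steeringBound F := le_csSup hbdd ⟨_, hunif, hunif_lhs, rfl⟩

/-- Each `σ_{a|x}` is dominated by the marginal `τ`, and `τ / |A|` on every outcome is an
unsteerable assemblage. -/
theorem steeringValue_le_card_mul_steeringBound [Nonempty A] {F : A → X → HMat ι}
    (hF : ∀ a x, (F a x).PosSemidef) (hbdd : BddAbove (unsteerableValues F))
    {τ : HMat ι} (hτ : IsDensity τ) {σ : A → X → HMat ι} (hσ : ∀ a x, (σ a x).PosSemidef)
    (hστ : ∀ x, ∑ a, σ a x = τ) :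
    steeringValue F σ ≤ Fintype.card A * steeringBound F := by
  have hcard : (Fintype.card A : ℝ) ≠ 0 := Nat.cast_ne_zero.mpr Fintype.card_ne_zero
  calc steeringValue F σ ≤ ∑ x, ∑ a, (F a x * τ).trace.re :=
        Finset.sum_le_sum fun x _ => Finset.sum_le_sum fun a _ =>
          hστ x ▸ Matrix.re_trace_mul_le_re_trace_mul_sum (hF a x) (hσ · x) a
    _ = Fintype.card A * ((Fintype.card A : ℝ)⁻¹ * ∑ x, ∑ a, (F a x * τ).trace.re) := by
        rw [mul_inv_cancel_left₀ hcard]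
    _ ≤ Fintype.card A * steeringBound F :=
        mul_le_mul_of_nonneg_left (card_inv_mul_le_steeringBound hbdd hτ) (Nat.cast_nonneg _)

end Steering

section LocalBound

variable {A B X Y : Type} [Fintype A] [Fintype B]

theorem IsLHV.le_one {P : A → B → X → Y → ℝ} (hP : IsLHV P) (a : A) (b : B) (x : X) (y : Y) :
    P a b x y ≤ 1 := by
  obtain ⟨n, w, pA, pB, hw, hw_sum, hpA, hpA_sum, hpB, hpB_sum, hP⟩ := hP
  have hpA_le : ∀ l, pA a x l ≤ 1 := fun l =>
    hpA_sum x l ▸ Finset.single_le_sum (fun a' _ => hpA a' x l) (Finset.mem_univ a)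
  have hpB_le : ∀ l, pB b y l ≤ 1 := fun l =>
    hpB_sum y l ▸ Finset.single_le_sum (fun b' _ => hpB b' y l) (Finset.mem_univ b)
  calc P a b x y = ∑ l, w l * pA a x l * pB b y l := hP a b x y
    _ ≤ ∑ l, w l := Finset.sum_le_sum fun l _ =>
          (mul_le_of_le_one_right (mul_nonneg (hw l) (hpA a x l)) (hpB_le l)).trans
            (mul_le_of_le_one_right (hw l) (hpA_le l))
    _ = 1 := hw_sum

variable [Fintype X] [Fintype Y]

def localValues (Bf : A → B → X → Y → ℝ) : Set ℝ :=
  {r | ∃ P : A → B → X → Y → ℝ, IsLHV P ∧ r = bellValue Bf P}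

theorem bddAbove_localValues {Bf : A → B → X → Y → ℝ} (hBf : ∀ a b x y, 0 ≤ Bf a b x y) :
    BddAbove (localValues Bf) := by
  refine ⟨∑ x, ∑ y, ∑ a, ∑ b, Bf a b x y, ?_⟩
  rintro _ ⟨P, hP, rfl⟩
  exact Finset.sum_le_sum fun x _ => Finset.sum_le_sum fun y _ => Finset.sum_le_sum fun a _ =>
    Finset.sum_le_sum fun b _ => mul_le_of_le_one_right (hBf a b x y) (hP.le_one a b x y)

end LocalBound

section InducedFunctional

variable {ι A B X Y : Type} [Fintype B] [Fintype Y]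

theorem posSemidef_inducedF {Bf : A → B → X → Y → ℝ} (hBf : ∀ a b x y, 0 ≤ Bf a b x y)
    {EB : B → Y → HMat ι} (hEB : ∀ b y, (EB b y).PosSemidef) (a : A) (x : X) :
    (inducedF Bf EB a x).PosSemidef :=
  Matrix.posSemidef_sum _ fun y _ => Matrix.posSemidef_sum _ fun b _ =>
    (hEB b y).smul (hBf a b x y)

variable [Fintype ι]

theorem re_trace_inducedF_mul (Bf : A → B → X → Y → ℝ) (EB : B → Y → HMat ι) (S : HMat ι)
    (a : A) (x : X) :
    (inducedF Bf EB a x * S).trace.re = ∑ y, ∑ b, Bf a b x y * (EB b y * S).trace.re := by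
  simp only [inducedF, Matrix.sum_mul, Matrix.smul_mul, Matrix.trace_sum, Matrix.trace_smul,
    Complex.re_sum, Complex.smul_re, smul_eq_mul]

variable [Fintype A] [Fintype X] [DecidableEq ι]

theorem IsUnsteerable.steeringValue_inducedF_mem_localValues {σ : A → X → HMat ι}
    (hσ : IsUnsteerable σ) (Bf : A → B → X → Y → ℝ) {EB : B → Y → HMat ι} (hEB : IsPOVM EB) :
    steeringValue (inducedF Bf EB) σ ∈ localValues Bf := by
  obtain ⟨n, w, p, τ, hw, hw_sum, hp, hp_sum, hτ, hστ⟩ := hσ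
  have hpB_sum : ∀ y l, ∑ b, (EB b y * τ l).trace.re = 1 := fun y l => by
    rw [← Complex.re_sum, ← Matrix.trace_sum, ← Matrix.sum_mul, hEB.2 y, one_mul, (hτ l).2,
      Complex.one_re]
  have hσ_val : ∀ a x b y,
      (EB b y * σ a x).trace.re = ∑ l, w l * p a x l * (EB b y * τ l).trace.re := by
    intro a x b y
    simp only [hστ, Matrix.mul_sum, Matrix.mul_smul, Matrix.trace_sum, Matrix.trace_smul,
      Complex.re_sum, Complex.smul_re, smul_eq_mul]
  refine ⟨fun a b x y => ∑ l, w l * p a x l * (EB b y * τ l).trace.re,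
    ⟨n, w, p, _, hw, hw_sum, hp, hp_sum,
      fun b y l => (hEB.1 b y).re_trace_mul_nonneg (hτ l).1, hpB_sum, fun _ _ _ _ => rfl⟩, ?_⟩
  simp only [steeringValue, bellValue, re_trace_inducedF_mul, hσ_val]
  exact Finset.sum_congr rfl fun x _ => Finset.sum_comm

theorem unsteerableValues_inducedF_subset (Bf : A → B → X → Y → ℝ) {EB : B → Y → HMat ι}
    (hEB : IsPOVM EB) : unsteerableValues (inducedF Bf EB) ⊆ localValues Bf := by
  rintro _ ⟨σ, -, hσ, rfl⟩
  exact hσ.steeringValue_inducedF_mem_localValues Bf hEB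

theorem bddAbove_unsteerableValues_inducedF {Bf : A → B → X → Y → ℝ}
    (hBf : ∀ a b x y, 0 ≤ Bf a b x y) {EB : B → Y → HMat ι} (hEB : IsPOVM EB) :
    BddAbove (unsteerableValues (inducedF Bf EB)) :=
  (bddAbove_localValues hBf).mono (unsteerableValues_inducedF_subset Bf hEB)

theorem steeringBound_inducedF_le_localBound {Bf : A → B → X → Y → ℝ}
    (hBf : ∀ a b x y, 0 ≤ Bf a b x y) (hω : 0 ≤ localBound Bf) {EB : B → Y → HMat ι}
    (hEB : IsPOVM EB) : steeringBound (inducedF Bf EB) ≤ localBound Bf :=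
  Real.sSup_le (fun _ hr => le_csSup (bddAbove_localValues hBf)
    (unsteerableValues_inducedF_subset Bf hEB hr)) hω

end InducedFunctional

section QuantumCorrelations

variable {ιA ιB A B X Y : Type} [Fintype ιA] [Fintype ιB] [DecidableEq ιB]

theorem posSemidef_inducedAssemblage {ρ : Matrix (ιA × ιB) (ιA × ιB) ℂ} (hρ : ρ.PosSemidef)
    {E : A → X → HMat ιA} (hE : ∀ a x, (E a x).PosSemidef) (a : A) (x : X) :
    (inducedAssemblage ρ E a x).PosSemidef :=
  posSemidef_ptraceA_mul_kronecker_one hρ (hE a x)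

theorem sum_inducedAssemblage [Fintype A] [DecidableEq ιA] (ρ : Matrix (ιA × ιB) (ιA × ιB) ℂ)
    {E : A → X → HMat ιA} (hE : IsPOVM E) (x : X) :
    ∑ a, inducedAssemblage ρ E a x = ptraceA ρ := by
  have hsum : ∑ a, E a x ⊗ₖ (1 : HMat ιB) = (∑ a, E a x) ⊗ₖ (1 : HMat ιB) := by
    ext p q
    simp [Matrix.sum_apply, Matrix.kroneckerMap_apply, Finset.sum_mul]
  simp only [inducedAssemblage]
  rw [← ptraceA_sum, ← Finset.mul_sum, hsum, hE.2 x, Matrix.one_kronecker_one, mul_one]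

variable [Fintype A] [Fintype B] [Fintype X] [Fintype Y]

theorem steeringValue_inducedF_inducedAssemblage (ρ : Matrix (ιA × ιB) (ιA × ιB) ℂ)
    (Bf : A → B → X → Y → ℝ) (EA : A → X → HMat ιA) (EB : B → Y → HMat ιB) :
    steeringValue (inducedF Bf EB) (inducedAssemblage ρ EA) =
      bellValue Bf (quantumCorr ρ EA EB) := by
  simp only [steeringValue, re_trace_inducedF_mul]
  simp only [bellValue, quantumCorr, inducedAssemblage, trace_mul_ptraceA_mul_kronecker_one]
  exact Finset.sum_congr rfl fun x _ => Finset.sum_comm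

variable [DecidableEq ιA] {ρ : Matrix (ιA × ιB) (ιA × ιB) ℂ} {Bf : A → B → X → Y → ℝ}
  {EA : A → X → HMat ιA} {EB : B → Y → HMat ιB}

theorem bellValue_quantumCorr_le_card_mul_steeringBound [Nonempty A] (hρ : IsDensity ρ)
    (hBf : ∀ a b x y, 0 ≤ Bf a b x y) (hEA : IsPOVM EA) (hEB : IsPOVM EB) :
    bellValue Bf (quantumCorr ρ EA EB) ≤ Fintype.card A * steeringBound (inducedF Bf EB) := by
  rw [← steeringValue_inducedF_inducedAssemblage]
  exact steeringValue_le_card_mul_steeringBound (posSemidef_inducedF hBf hEB.1)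
    (bddAbove_unsteerableValues_inducedF hBf hEB) (isDensity_ptraceA hρ)
    (posSemidef_inducedAssemblage hρ.1 hEA.1) (sum_inducedAssemblage ρ hEA)

theorem steeringFraction_inducedAssemblage_le_card [Nonempty A] (hρ : IsDensity ρ)
    (hBf : ∀ a b x y, 0 ≤ Bf a b x y) (hEA : IsPOVM EA) (hEB : IsPOVM EB)
    (hs : 0 < steeringBound (inducedF Bf EB)) :
    steeringFraction (inducedAssemblage ρ EA) (inducedF Bf EB) ≤ Fintype.card A := by
  rw [steeringFraction, div_le_iff₀ hs, steeringValue_inducedF_inducedAssemblage]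
  exact bellValue_quantumCorr_le_card_mul_steeringBound hρ hBf hEA hEB

theorem steeringFraction_inducedAssemblage_le_LVs [Nonempty A] (hρ : IsDensity ρ)
    (hBf : ∀ a b x y, 0 ≤ Bf a b x y) (hEA : IsPOVM EA) (hEB : IsPOVM EB)
    (hs : 0 < steeringBound (inducedF Bf EB)) :
    steeringFraction (inducedAssemblage ρ EA) (inducedF Bf EB) ≤ LVs ρ (inducedF Bf EB) := by
  refine le_csSup ⟨Fintype.card A, ?_⟩ ⟨EA, hEA, rfl⟩
  rintro _ ⟨E, hE, rfl⟩
  exact steeringFraction_inducedAssemblage_le_card hρ hBf hE hEB hs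

theorem LVs_inducedF_le_card [Nonempty A] (hρ : IsDensity ρ) (hBf : ∀ a b x y, 0 ≤ Bf a b x y)
    (hEB : IsPOVM EB) (hs : 0 < steeringBound (inducedF Bf EB)) :
    LVs ρ (inducedF Bf EB) ≤ Fintype.card A := by
  refine Real.sSup_le ?_ (Nat.cast_nonneg _)
  rintro _ ⟨E, hE, rfl⟩
  exact steeringFraction_inducedAssemblage_le_card hρ hBf hE hEB hs

theorem LVs_nonneg (hρ : ρ.PosSemidef) {F : A → X → HMat ιB} (hF : ∀ a x, (F a x).PosSemidef)
    (hs : 0 ≤ steeringBound F) : 0 ≤ LVs ρ F := by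
  refine Real.sSup_nonneg ?_
  rintro _ ⟨E, hE, rfl⟩
  exact div_nonneg (steeringValue_nonneg hF (posSemidef_inducedAssemblage hρ hE.1)) hs

theorem nonlocalityFraction_quantumCorr_le_LVs [Nonempty A] (hρ : IsDensity ρ)
    (hBf : ∀ a b x y, 0 ≤ Bf a b x y) (hω : 0 < localBound Bf) (hEA : IsPOVM EA)
    (hEB : IsPOVM EB) (hs : 0 < steeringBound (inducedF Bf EB)) :
    nonlocalityFraction (quantumCorr ρ EA EB) Bf ≤ LVs ρ (inducedF Bf EB) := by
  have hval : 0 ≤ bellValue Bf (quantumCorr ρ EA EB) := by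
    rw [← steeringValue_inducedF_inducedAssemblage]
    exact steeringValue_nonneg (posSemidef_inducedF hBf hEB.1)
      (posSemidef_inducedAssemblage hρ.1 hEA.1)
  calc nonlocalityFraction (quantumCorr ρ EA EB) Bf
      ≤ bellValue Bf (quantumCorr ρ EA EB) / steeringBound (inducedF Bf EB) :=
        div_le_div_of_nonneg_left hval hs (steeringBound_inducedF_le_localBound hBf hω.le hEB)
    _ = steeringFraction (inducedAssemblage ρ EA) (inducedF Bf EB) := by
        rw [steeringFraction, steeringValue_inducedF_inducedAssemblage]
    _ ≤ LVs ρ (inducedF Bf EB) := steeringFraction_inducedAssemblage_le_LVs hρ hBf hEA hEB hs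

theorem nonlocalityFraction_quantumCorr_nonpos [Nonempty A] (hρ : IsDensity ρ)
    (hBf : ∀ a b x y, 0 ≤ Bf a b x y) (hω : 0 < localBound Bf) (hEA : IsPOVM EA)
    (hEB : IsPOVM EB) (hs : steeringBound (inducedF Bf EB) ≤ 0) :
    nonlocalityFraction (quantumCorr ρ EA EB) Bf ≤ 0 := by
  refine div_nonpos_of_nonpos_of_nonneg ?_ hω.le
  calc bellValue Bf (quantumCorr ρ EA EB) ≤ Fintype.card A * steeringBound (inducedF Bf EB) :=
        bellValue_quantumCorr_le_card_mul_steeringBound hρ hBf hEA hEB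
    _ ≤ 0 := mul_nonpos_of_nonneg_of_nonpos (Nat.cast_nonneg _) hs

end QuantumCorrelations

theorem stmt18_general {A B X Y : Type} [Fintype A] [Fintype B] [Fintype X] [Fintype Y]
    [Nonempty A] (d : ℕ)
    (ρ : Matrix (Fin d × Fin d) (Fin d × Fin d) ℂ) (hρ : IsDensity ρ)
    (Bf : A → B → X → Y → ℝ) (hBf : ∀ a b x y, 0 ≤ Bf a b x y)
    (hω : 0 < localBound Bf) :
    LV ρ Bf ≤
      sSup {r : ℝ | ∃ EB : B → Y → HMat (Fin d), IsPOVM EB ∧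
        0 < steeringBound (inducedF Bf EB) ∧ r = LVs ρ (inducedF Bf EB)} := by
  set S := {r : ℝ | ∃ EB : B → Y → HMat (Fin d), IsPOVM EB ∧
    0 < steeringBound (inducedF Bf EB) ∧ r = LVs ρ (inducedF Bf EB)}
  have hS_nonneg : 0 ≤ sSup S := by
    refine Real.sSup_nonneg ?_
    rintro _ ⟨EB, hEB, hs, rfl⟩
    exact LVs_nonneg hρ.1 (posSemidef_inducedF hBf hEB.1) hs.le
  have hS_bdd : BddAbove S := by
    refine ⟨Fintype.card A, ?_⟩
    rintro _ ⟨EB, hEB, hs, rfl⟩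
    exact LVs_inducedF_le_card hρ hBf hEB hs
  refine Real.sSup_le ?_ hS_nonneg
  rintro _ ⟨EA, EB, hEA, hEB, rfl⟩
  rcases lt_or_ge 0 (steeringBound (inducedF Bf EB)) with hs | hs
  · exact (nonlocalityFraction_quantumCorr_le_LVs hρ hBf hω hEA hEB hs).trans
      (le_csSup hS_bdd ⟨EB, hEB, hs, rfl⟩)
  · exact (nonlocalityFraction_quantumCorr_nonpos hρ hBf hω hEA hEB hs).trans hS_nonneg

/-- Theorem 6: the largest Bell-inequality violation is bounded by the
largest induced steering-inequality violation:
`LV(ρ, B) ≤ sup_{E_B} LV_s(ρ, F_(B;E_B))`. -/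
theorem stmt18 {A B X Y : Type} [Fintype A] [Fintype B] [Fintype X] [Fintype Y]
    [Nonempty A] [Nonempty B] [Nonempty X] [Nonempty Y]
    (d : ℕ) (hd : 0 < d)
    (ρ : Matrix (Fin d × Fin d) (Fin d × Fin d) ℂ) (hρ : IsDensity ρ)
    (Bf : A → B → X → Y → ℝ) (hBf : ∀ a b x y, 0 ≤ Bf a b x y)
    (hω : 0 < localBound Bf) :
    LV ρ Bf ≤
      sSup {r : ℝ | ∃ EB : B → Y → HMat (Fin d), IsPOVM EB ∧
        0 < steeringBound (inducedF Bf EB) ∧ r = LVs ρ (inducedF Bf EB)} :=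
  stmt18_general d ρ hρ Bf hBf hω

end QSteer

end
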